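/- arXiv:1504.07900 — 8 statements merged into one kernel-verified Lean document; each statement's English description precedes it below -/
import Mathlib

section
/- The quantity α²y_T² + (1−α²)(α²x_A² − x_T²) appearing under the square root is positive whenever α > ᾱ, where ᾱ = (√((x_A+x_T)²+y_T²) − √((x_A−x_T)²+y_T²))/(2x_A). -/
/-- α²y_T² + (1−α²)(α²x_A² − x_T²) > 0 whenever α > ᾱ, where ᾱ is the
critical speed ratio. -/
theorem discriminant_pos_of_gt_critical
    (xA xT yT α : ℝ) (hxA : 0 < xA) (hxT : 0 < xT)
    (hα : 0 < α) (hα1 : α < 1)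
    (hgt : α > (Real.sqrt ((xA + xT) ^ 2 + yT ^ 2) -
                 Real.sqrt ((xA - xT) ^ 2 + yT ^ 2)) / (2 * xA)) :
    α ^ 2 * yT ^ 2 + (1 - α ^ 2) * (α ^ 2 * xA ^ 2 - xT ^ 2) > 0 := by
  set s := Real.sqrt ((xA + xT) ^ 2 + yT ^ 2) with hs
  set t := Real.sqrt ((xA - xT) ^ 2 + yT ^ 2) with ht
  have hs0 : 0 ≤ s := Real.sqrt_nonneg _
  have ht0 : 0 ≤ t := Real.sqrt_nonneg _
  have hs2 : s ^ 2 = (xA + xT) ^ 2 + yT ^ 2 := Real.sq_sqrt (by positivity)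
  have ht2 : t ^ 2 = (xA - xT) ^ 2 + yT ^ 2 := Real.sq_sqrt (by positivity)
  have h1 : s < 2 * xA * α + t := by
    have := (div_lt_iff₀ (by linarith : (0:ℝ) < 2 * xA)).mp hgt
    linarith
  have h2 : s ^ 2 < (2 * xA * α + t) ^ 2 := by
    apply sq_lt_sq' (by nlinarith) h1
  have key' : xA * (xT - α ^ 2 * xA) < xA * (α * t) := by nlinarith
  have key : xT - α ^ 2 * xA < α * t := (mul_lt_mul_iff_right₀ hxA).mp key'
  have htge : xA - xT ≤ t := by nlinarith [sq_nonneg yT]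
  have h3 : 0 < α * t + xT - α ^ 2 * xA := by
    nlinarith [mul_le_mul_of_nonneg_left htge hα.le,
      mul_pos (mul_pos hα hxA) (sub_pos.mpr hα1),
      mul_pos hxT (sub_pos.mpr hα1)]
  have hprod : 0 < (α * t - (xT - α ^ 2 * xA)) * (α * t + xT - α ^ 2 * xA) :=
    mul_pos (by linarith) h3
  nlinarith [hprod, ht2, sq_nonneg α]
end

section
/- At any critical point y of J (i.e., where αy/√(x_A²+y²) = (y−y_T)/√((y−y_T)²+x_T²) and y > y_T), the second derivative satisfies J''(y) = (α/(x_A²+y²)^{3/2})·(x_A² − α²(y/(y−y_T))³·x_T²). Consequently J''(y) < 0 if and only if (1/α²)(x_A/x_T)² < (y/(y−y_T))³. -/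
/-- At a critical point y > y_T of J, the second derivative simplifies to
(α/(x_A²+y²)^{3/2})(x_A² − α²(y/(y−y_T))³x_T²), and it is negative iff
(1/α²)(x_A/x_T)² < (y/(y−y_T))³. -/
theorem second_derivative_at_critical_point
    (xA xT yT α y : ℝ) (hxA : 0 < xA) (hxT : 0 < xT) (hyT : 0 < yT)
    (hα : 0 < α) (hα1 : α < 1) (hy : yT < y)
    (hcrit : α * y / Real.sqrt (xA ^ 2 + y ^ 2) =
        (y - yT) / Real.sqrt ((y - yT) ^ 2 + xT ^ 2)) :
    (α * xA ^ 2 / (Real.sqrt (xA ^ 2 + y ^ 2)) ^ 3 -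
        xT ^ 2 / (Real.sqrt ((y - yT) ^ 2 + xT ^ 2)) ^ 3 =
      α / (Real.sqrt (xA ^ 2 + y ^ 2)) ^ 3 *
        (xA ^ 2 - α ^ 2 * (y / (y - yT)) ^ 3 * xT ^ 2)) ∧
    (α * xA ^ 2 / (Real.sqrt (xA ^ 2 + y ^ 2)) ^ 3 -
        xT ^ 2 / (Real.sqrt ((y - yT) ^ 2 + xT ^ 2)) ^ 3 < 0 ↔
      1 / α ^ 2 * (xA / xT) ^ 2 < (y / (y - yT)) ^ 3) := by
  have hy0 : 0 < y := hyT.trans hy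
  have hyyT : 0 < y - yT := by linarith
  set A := Real.sqrt (xA ^ 2 + y ^ 2) with hAdef
  set B := Real.sqrt ((y - yT) ^ 2 + xT ^ 2) with hBdef
  have hA : 0 < A := Real.sqrt_pos.mpr (by positivity)
  have hB : 0 < B := Real.sqrt_pos.mpr (by positivity)
  have key : α * y * B = (y - yT) * A := by
    rw [div_eq_div_iff hA.ne' hB.ne'] at hcrit
    exact hcrit
  have key3 : (α * y * B) ^ 3 = ((y - yT) * A) ^ 3 := by rw [key]
  have h1 : α * xA ^ 2 / A ^ 3 - xT ^ 2 / B ^ 3 =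
      α / A ^ 3 * (xA ^ 2 - α ^ 2 * (y / (y - yT)) ^ 3 * xT ^ 2) := by
    have hBA : xT ^ 2 / B ^ 3 = α ^ 3 * y ^ 3 * xT ^ 2 / ((y - yT) ^ 3 * A ^ 3) := by
      rw [div_eq_div_iff (by positivity) (by positivity)]
      linear_combination (-xT ^ 2) * key3
    rw [hBA]
    field_simp
  refine ⟨h1, ?_⟩
  rw [h1]
  have hc : 0 < α / A ^ 3 := by positivity
  have hCpos : 0 < (y / (y - yT)) ^ 3 := by positivity
  have heq : 1 / α ^ 2 * (xA / xT) ^ 2 = xA ^ 2 / (α ^ 2 * xT ^ 2) := by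
    field_simp
  constructor
  · intro h
    have h' : xA ^ 2 - α ^ 2 * (y / (y - yT)) ^ 3 * xT ^ 2 < 0 := by
      by_contra h''
      push_neg at h''
      nlinarith
    rw [heq, div_lt_iff₀ (by positivity)]
    nlinarith
  · intro h
    rw [heq, div_lt_iff₀ (by positivity)] at h
    have h' : xA ^ 2 - α ^ 2 * (y / (y - yT)) ^ 3 * xT ^ 2 < 0 := by nlinarith
    exact mul_neg_of_pos_of_neg hc h'
end

section
/- At any critical point y > y_T of J, the value of J simplifies to J(y) = (1/α)·√(x_A²+y²)·(y_T/y − (1−α²)). -/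
/-- At a critical point y > y_T of J, the value simplifies to
J(y) = (1/α)√(x_A²+y²)(y_T/y − (1−α²)). -/
theorem payoff_at_critical_point
    (xA xT yT α y : ℝ) (hxA : 0 < xA) (hxT : 0 < xT) (hyT : 0 < yT)
    (hα : 0 < α) (hα1 : α < 1) (hy : yT < y)
    (hcrit : α * y / Real.sqrt (xA ^ 2 + y ^ 2) =
        (y - yT) / Real.sqrt ((y - yT) ^ 2 + xT ^ 2)) :
    α * Real.sqrt (xA ^ 2 + y ^ 2) -
        Real.sqrt ((y - yT) ^ 2 + xT ^ 2) =
      1 / α * Real.sqrt (xA ^ 2 + y ^ 2) * (yT / y - (1 - α ^ 2)) := by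
  have hy0 : 0 < y := hyT.trans hy
  have hA : 0 < Real.sqrt (xA ^ 2 + y ^ 2) :=
    Real.sqrt_pos.mpr (by positivity)
  have hB : 0 < Real.sqrt ((y - yT) ^ 2 + xT ^ 2) :=
    Real.sqrt_pos.mpr (by positivity)
  set A := Real.sqrt (xA ^ 2 + y ^ 2)
  set B := Real.sqrt ((y - yT) ^ 2 + xT ^ 2)
  have hcr : α * y * B = (y - yT) * A := (div_eq_div_iff hA.ne' hB.ne').mp hcrit
  field_simp
  linear_combination (-1) * hcr
end

section
/- If y > y_T is a critical point of J and J(y) > 0, then y_T < y < y_T/(1−α²). -/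
/-- If y > y_T is a critical point of J with J(y) > 0 then
y_T < y < y_T/(1−α²). -/
theorem optimal_y_bounds
    (xA xT yT α y : ℝ) (hxA : 0 < xA) (hxT : 0 < xT) (hyT : 0 < yT)
    (hα : 0 < α) (hα1 : α < 1) (hy : yT < y)
    (hcrit : α * y / Real.sqrt (xA ^ 2 + y ^ 2) =
        (y - yT) / Real.sqrt ((y - yT) ^ 2 + xT ^ 2))
    (hJ : α * Real.sqrt (xA ^ 2 + y ^ 2) -
        Real.sqrt ((y - yT) ^ 2 + xT ^ 2) > 0) :
    yT < y ∧ y < yT / (1 - α ^ 2) := by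
  set s := Real.sqrt (xA ^ 2 + y ^ 2) with hsdef
  set t := Real.sqrt ((y - yT) ^ 2 + xT ^ 2) with htdef
  have hs : 0 < s := Real.sqrt_pos.mpr (by positivity)
  have ht : 0 < t := Real.sqrt_pos.mpr (by positivity)
  have hcrit' : α * y * t = (y - yT) * s := by
    field_simp at hcrit
    linarith [hcrit]
  have hts : t < α * s := by linarith
  -- α² y t = α (y-yT) s > (y-yT) t
  have key : α ^ 2 * y * t > (y - yT) * t := by
    have h1 : α ^ 2 * y * t = α * ((y - yT) * s) := by ring_nf; nlinarith [hcrit']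
    have h2 : α * ((y - yT) * s) > (y - yT) * t := by
      have := mul_lt_mul_of_pos_left hts (show (0:ℝ) < y - yT by linarith)
      nlinarith
    linarith
  have hy2 : α ^ 2 * y > y - yT := lt_of_mul_lt_mul_right (by linarith [key]) ht.le
  constructor
  · exact hy
  · rw [lt_div_iff₀ (by nlinarith : (0:ℝ) < 1 - α ^ 2)]
    nlinarith
end

section
/- If y > y_T is a critical point of J that is a strict local maximum (so J''(y) < 0), then y < y_T/(1 − α^{2/3}(x_T/x_A)^{2/3}), provided α^{2/3}(x_T/x_A)^{2/3} < 1. -/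
/-- If y > y_T is a critical point of J with J''(y) < 0, then
y < y_T/(1 − α^{2/3}(x_T/x_A)^{2/3}), provided α^{2/3}(x_T/x_A)^{2/3} < 1. -/
theorem strict_max_upper_bound
    (xA xT yT α y : ℝ) (hxA : 0 < xA) (hxT : 0 < xT) (hyT : 0 < yT)
    (hα : 0 < α) (hα1 : α < 1) (hy : yT < y)
    (hcrit : α * y / Real.sqrt (xA ^ 2 + y ^ 2) =
        (y - yT) / Real.sqrt ((y - yT) ^ 2 + xT ^ 2))
    (hsec : α / (Real.sqrt (xA ^ 2 + y ^ 2)) ^ 3 *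
        (xA ^ 2 - α ^ 2 * (y / (y - yT)) ^ 3 * xT ^ 2) < 0)
    (hlt : α ^ ((2 : ℝ) / 3) * (xT / xA) ^ ((2 : ℝ) / 3) < 1) :
    y < yT / (1 - α ^ ((2 : ℝ) / 3) * (xT / xA) ^ ((2 : ℝ) / 3)) := by
  have hyy : 0 < y - yT := by linarith
  have hy0 : 0 < y := lt_trans hyT hy
  have hs : 0 < Real.sqrt (xA ^ 2 + y ^ 2) := Real.sqrt_pos.mpr (by positivity)
  have hcoef : 0 < α / (Real.sqrt (xA ^ 2 + y ^ 2)) ^ 3 := by positivity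
  have hfac : xA ^ 2 - α ^ 2 * (y / (y - yT)) ^ 3 * xT ^ 2 < 0 := by
    by_contra h
    push_neg at h
    exact absurd hsec (not_lt.mpr (mul_nonneg hcoef.le h))
  -- key polynomial inequality
  have hkey : xA ^ 2 * (y - yT) ^ 3 < α ^ 2 * y ^ 3 * xT ^ 2 := by
    have h1 : xA ^ 2 < α ^ 2 * (y / (y - yT)) ^ 3 * xT ^ 2 := by linarith
    have h2 := mul_lt_mul_of_pos_right h1 (pow_pos hyy 3)
    calc xA ^ 2 * (y - yT) ^ 3 < α ^ 2 * (y / (y - yT)) ^ 3 * xT ^ 2 * (y - yT) ^ 3 := h2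
      _ = α ^ 2 * y ^ 3 * xT ^ 2 := by field_simp
  set a : ℝ := xA ^ ((2:ℝ)/3) * (y - yT) with ha
  set b : ℝ := α ^ ((2:ℝ)/3) * xT ^ ((2:ℝ)/3) * y with hb
  have hcube : ∀ x : ℝ, 0 < x → (x ^ ((2:ℝ)/3)) ^ 3 = x ^ 2 := by
    intro x hx
    rw [← Real.rpow_natCast (x ^ ((2:ℝ)/3)) 3, ← Real.rpow_mul hx.le]
    norm_num
  have hab : a ^ 3 < b ^ 3 := by
    have : a ^ 3 = xA ^ 2 * (y - yT) ^ 3 := by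
      rw [ha, mul_pow, hcube xA hxA]
    rw [this]
    have : b ^ 3 = α ^ 2 * y ^ 3 * xT ^ 2 := by
      rw [hb, mul_pow, mul_pow, hcube α hα, hcube xT hxT]; ring
    rw [this]
    exact hkey
  have hane : 0 ≤ a := by positivity
  have hbne : 0 ≤ b := by positivity
  have hab' : a < b := lt_of_pow_lt_pow_left₀ 3 hbne hab
  -- translate to the desired form
  have hdiv : (xT / xA) ^ ((2:ℝ)/3) = xT ^ ((2:ℝ)/3) / xA ^ ((2:ℝ)/3) :=
    Real.div_rpow hxT.le hxA.le ((2:ℝ)/3)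
  have hxA23 : 0 < xA ^ ((2:ℝ)/3) := Real.rpow_pos_of_pos hxA _
  have h3 : y - yT < α ^ ((2:ℝ)/3) * (xT / xA) ^ ((2:ℝ)/3) * y := by
    rw [hdiv]
    rw [ha, hb] at hab'
    have heq : α ^ ((2:ℝ)/3) * (xT ^ ((2:ℝ)/3) / xA ^ ((2:ℝ)/3)) * y
        = α ^ ((2:ℝ)/3) * xT ^ ((2:ℝ)/3) * y / xA ^ ((2:ℝ)/3) := by ring
    rw [heq, lt_div_iff₀ hxA23]
    nlinarith [hab']
  have hc : 0 < 1 - α ^ ((2:ℝ)/3) * (xT / xA) ^ ((2:ℝ)/3) := by linarith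
  rw [lt_div_iff₀ hc]
  nlinarith [h3]
end

section
/- For x_T > 0, x_A > 0, y_T, the inequality x_T − α²x_A < α√((x_A−x_T)²+y_T²) is equivalent to x_A²/(x_T/α)² + y_T²/((√(1−α²)/α)·x_T)² > 1. -/
/-- Equivalence of the Apollonius intersection condition and the
escape-region condition in ellipse form. -/
theorem escape_condition_equivalence
    (xA xT yT α : ℝ) (hxA : 0 < xA) (hxT : 0 < xT)
    (hα : 0 < α) (hα1 : α < 1) (hpos : α ^ 2 * xA < xT) :
    (xT - α ^ 2 * xA < α * Real.sqrt ((xA - xT) ^ 2 + yT ^ 2)) ↔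
      xA ^ 2 / (xT / α) ^ 2 +
        yT ^ 2 / (Real.sqrt (1 - α ^ 2) / α * xT) ^ 2 > 1 := by
  have hE : (0:ℝ) ≤ (xA - xT) ^ 2 + yT ^ 2 := by positivity
  have h1 : (0:ℝ) < 1 - α ^ 2 := by nlinarith
  have hs : Real.sqrt (1 - α ^ 2) ^ 2 = 1 - α ^ 2 := Real.sq_sqrt h1.le
  have hs2 : Real.sqrt ((xA - xT) ^ 2 + yT ^ 2) ^ 2 = (xA - xT) ^ 2 + yT ^ 2 :=
    Real.sq_sqrt hE
  have key : xA ^ 2 / (xT / α) ^ 2 +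
      yT ^ 2 / (Real.sqrt (1 - α ^ 2) / α * xT) ^ 2 > 1 ↔
      (1 - α ^ 2) * xT ^ 2 < α ^ 2 * (1 - α ^ 2) * xA ^ 2 + α ^ 2 * yT ^ 2 := by
    have d2 : (Real.sqrt (1 - α ^ 2) / α * xT) ^ 2 = (1 - α ^ 2) * xT ^ 2 / α ^ 2 := by
      rw [mul_pow, div_pow, hs]; ring
    rw [gt_iff_lt, div_pow, d2, div_div_eq_mul_div, div_div_eq_mul_div,
      div_add_div _ _ (by positivity) (by positivity), lt_div_iff₀ (by positivity)]
    constructor <;> intro h <;>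
      nlinarith [mul_pos (pow_pos hxT 2) h1, pow_pos hxT 2, sq_nonneg xT]
  rw [key]
  have hapos : 0 < xT - α ^ 2 * xA := by linarith
  constructor
  · intro h
    have h2 := pow_lt_pow_left₀ h hapos.le two_ne_zero
    rw [mul_pow, hs2] at h2
    nlinarith
  · intro h
    have h2 : (xT - α ^ 2 * xA) ^ 2 < (α * Real.sqrt ((xA - xT) ^ 2 + yT ^ 2)) ^ 2 := by
      rw [mul_pow, hs2]; nlinarith
    exact lt_of_pow_lt_pow_left₀ 2 (by positivity) h2
end

section
/- If the Target's position satisfies the escape condition α²((x_A−x_T)²+y_T²) > (x_T−α²x_A)² with x_T > α²x_A, then the maximum value of J over the intersection interval [y̲, ȳ] is positive, where J(y) = α√(x_A²+y²) − √((y−y_T)²+x_T²); in particular there exists y with J(y) > 0. -/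
/-! On the y-axis, `α² (x_A² + y²) − (x_T² + (y − y_T)²)` is a concave quadratic in `y` whose
maximum, attained at `y = y_T / (1 − α²)`, is the escape gap
`α² ((x_A − x_T)² + y_T²) − (x_T − α² x_A)²` divided by `1 − α²`. So the escape condition is exactly
what puts a point of the y-axis inside the Apollonius circle, and there `J` is positive. -/

theorem one_sub_sq_mul_apollonius_gap (xA xT yT α y : ℝ) :
    (1 - α ^ 2) * (α ^ 2 * (xA ^ 2 + y ^ 2) - (xT ^ 2 + (y - yT) ^ 2)) =
      (α ^ 2 * ((xA - xT) ^ 2 + yT ^ 2) - (xT - α ^ 2 * xA) ^ 2) - ((1 - α ^ 2) * y - yT) ^ 2 := by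
  ring

theorem exists_sq_lt_of_escape {xA xT yT α : ℝ} (hα : α ^ 2 < 1)
    (hesc : α ^ 2 * ((xA - xT) ^ 2 + yT ^ 2) > (xT - α ^ 2 * xA) ^ 2) :
    ∃ y : ℝ, xT ^ 2 + (y - yT) ^ 2 < α ^ 2 * (xA ^ 2 + y ^ 2) := by
  have hβ : 0 < 1 - α ^ 2 := sub_pos.mpr hα
  refine ⟨yT / (1 - α ^ 2), ?_⟩
  have hvertex : (1 - α ^ 2) * (yT / (1 - α ^ 2)) - yT = 0 := by field_simp; ring
  have hgap := one_sub_sq_mul_apollonius_gap xA xT yT α (yT / (1 - α ^ 2))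
  rw [hvertex] at hgap
  refine sub_pos.mp (pos_of_mul_pos_right ?_ hβ.le)
  rw [hgap]
  linarith

theorem sqrt_lt_mul_sqrt {a b c : ℝ} (ha : 0 ≤ a) (hc : 0 ≤ c) (h : a < c ^ 2 * b) :
    √a < c * √b := by
  calc √a < √(c ^ 2 * b) := Real.sqrt_lt_sqrt ha h
    _ = c * √b := by rw [Real.sqrt_mul (sq_nonneg c), Real.sqrt_sq hc]

theorem escape_region_positive_payoff_general
    (xA xT yT α : ℝ)
    (hα : 0 < α) (hα1 : α < 1)
    (hesc : α ^ 2 * ((xA - xT) ^ 2 + yT ^ 2) > (xT - α ^ 2 * xA) ^ 2) :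
    (∀ y : ℝ,
      Real.sqrt (xT ^ 2 + (y - yT) ^ 2) < α * Real.sqrt (xA ^ 2 + y ^ 2) →
      α * Real.sqrt (xA ^ 2 + y ^ 2) -
        Real.sqrt ((y - yT) ^ 2 + xT ^ 2) > 0) ∧
    (∃ y : ℝ,
      Real.sqrt (xT ^ 2 + (y - yT) ^ 2) < α * Real.sqrt (xA ^ 2 + y ^ 2)) := by
  refine ⟨fun y hy => ?_, ?_⟩
  · rw [add_comm ((y - yT) ^ 2)]
    exact sub_pos.mpr hy
  · obtain ⟨y, hy⟩ := exists_sq_lt_of_escape (pow_lt_one₀ hα.le hα1 two_ne_zero) hesc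
    exact ⟨y, sqrt_lt_mul_sqrt (by positivity) hα.le hy⟩

/-- Under the escape condition, any point (0,y) strictly inside the
Apollonius circle gives J(y) > 0, and such a point exists; in particular
the maximum of J is positive. -/
theorem escape_region_positive_payoff
    (xA xT yT α : ℝ) (hxA : 0 < xA) (hxT : 0 < xT)
    (hα : 0 < α) (hα1 : α < 1) (hpos : α ^ 2 * xA < xT)
    (hesc : α ^ 2 * ((xA - xT) ^ 2 + yT ^ 2) > (xT - α ^ 2 * xA) ^ 2) :
    (∀ y : ℝ,
      Real.sqrt (xT ^ 2 + (y - yT) ^ 2) < α * Real.sqrt (xA ^ 2 + y ^ 2) →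
      α * Real.sqrt (xA ^ 2 + y ^ 2) -
        Real.sqrt ((y - yT) ^ 2 + xT ^ 2) > 0) ∧
    (∃ y : ℝ,
      Real.sqrt (xT ^ 2 + (y - yT) ^ 2) < α * Real.sqrt (xA ^ 2 + y ^ 2)) :=
  escape_region_positive_payoff_general xA xT yT α hα hα1 hesc
end

section
/- If (x_T, y_T) lies strictly inside the right branch of the hyperbola, i.e., x_T > 0 and x_T²/(α²x_A²) − y_T²/((1−α²)x_A²) > 1, then for every y ∈ ℝ, J(y) = α√(x_A²+y²) − √((y−y_T)²+x_T²) < 0; i.e., the Target cannot reach any point of the y-axis before the Attacker. -/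
/-- If (x_T, y_T) lies strictly inside the right branch of the hyperbola
(capture region), then J(y) < 0 for every y. -/
theorem capture_region_negative_payoff
    (xA xT yT α : ℝ) (hxA : 0 < xA) (hxT : 0 < xT)
    (hα : 0 < α) (hα1 : α < 1) (hpos : α ^ 2 * xA < xT)
    (hcap : xT - α ^ 2 * xA > α * Real.sqrt ((xA - xT) ^ 2 + yT ^ 2)) :
    ∀ y : ℝ,
      α * Real.sqrt (xA ^ 2 + y ^ 2) -
        Real.sqrt ((y - yT) ^ 2 + xT ^ 2) < 0 := by
  intro y
  have hS : (0:ℝ) ≤ (xA - xT) ^ 2 + yT ^ 2 := by positivity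
  have hs := Real.sq_sqrt hS
  have hsnn := Real.sqrt_nonneg ((xA - xT) ^ 2 + yT ^ 2)
  -- squared capture condition
  have h0 : 0 ≤ α * Real.sqrt ((xA - xT) ^ 2 + yT ^ 2) := by positivity
  have hsq := mul_self_lt_mul_self h0 hcap
  have hcap2 : α ^ 2 * ((xA - xT) ^ 2 + yT ^ 2) < (xT - α ^ 2 * xA) ^ 2 := by
    nlinarith [hsq, hs]
  have h1a : (0:ℝ) < 1 - α ^ 2 := by nlinarith
  -- key quadratic inequality
  have hkey : α ^ 2 * (xA ^ 2 + y ^ 2) < (y - yT) ^ 2 + xT ^ 2 := by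
    nlinarith [sq_nonneg ((1 - α ^ 2) * y - yT), hcap2, h1a, mul_pos h1a h1a]
  have h1 : α * Real.sqrt (xA ^ 2 + y ^ 2)
      = Real.sqrt (α ^ 2 * (xA ^ 2 + y ^ 2)) := by
    rw [Real.sqrt_mul (by positivity), Real.sqrt_sq hα.le]
  have h2 : Real.sqrt (α ^ 2 * (xA ^ 2 + y ^ 2)) < Real.sqrt ((y - yT) ^ 2 + xT ^ 2) :=
    Real.sqrt_lt_sqrt (by positivity) hkey
  linarith [h1 ▸ h2]
end
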